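/- Suppose r is even and s is even. Then the element γ = a₁a₃a₅⋯a_{r−1} (product of the generators with odd indices) is an odometer; consequently G = ⟨⟨a₁,…,a_r⟩⟩ contains an odometer. -/

import Mathlib

namespace BinTree

/-- Vertices of the infinite rooted binary tree: finite words over `{0,1}`. -/
abbrev Vertex : Type := List Bool

/-- A function on vertices is a tree automorphism function if it preserves lengths
(levels) and prefixes. -/
def IsTreeAutFun (f : Vertex → Vertex) : Prop :=
  (∀ v, (f v).length = v.length) ∧ ∀ v w : Vertex, (f (v ++ w)).take v.length = f v

/-- `Ω`: the automorphism group of the infinite rooted binary tree, realized as the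
subgroup of permutations of the set of vertices preserving the tree structure. -/
def TreeAut : Subgroup (Equiv.Perm Vertex) where
  carrier := {e | IsTreeAutFun ⇑e}
  one_mem' := ⟨fun _ => rfl, fun v w => by
    simpa using List.take_left (l₁ := v) (l₂ := w)⟩
  mul_mem' := by
    rintro a b ha hb
    obtain ⟨ha1, ha2⟩ := ha
    obtain ⟨hb1, hb2⟩ := hb
    refine ⟨fun v => ?_, fun v w => ?_⟩
    · simp [Equiv.Perm.mul_apply, ha1, hb1]
    · have hb' : b (v ++ w) = b v ++ (b (v ++ w)).drop v.length := by
        conv_lhs => rw [← List.take_append_drop v.length (b (v ++ w)), hb2]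
      have hlen : (b v).length = v.length := hb1 v
      calc ((a * b) (v ++ w)).take v.length
          = (a (b v ++ (b (v ++ w)).drop v.length)).take v.length := by
            rw [Equiv.Perm.mul_apply, ← hb']
        _ = a (b v) := by rw [← hlen]; exact ha2 _ _
        _ = (a * b) v := rfl
  inv_mem' := by
    intro a ha
    obtain ⟨ha1, ha2⟩ := ha
    show IsTreeAutFun ⇑a⁻¹
    have hlen : ∀ v : Vertex, (a⁻¹ v).length = v.length := by
      intro v
      have h := ha1 (a⁻¹ v)
      rw [show ∀ x : Vertex, a (a⁻¹ x) = x from Equiv.apply_symm_apply a] at h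
      exact h.symm ▸ rfl
    refine ⟨hlen, fun v w => ?_⟩
    have htl : ((a⁻¹ (v ++ w)).take v.length).length = v.length := by
      rw [List.length_take, hlen, List.length_append]
      omega
    have key : a ((a⁻¹ (v ++ w)).take v.length) = v := by
      have h2 := ha2 ((a⁻¹ (v ++ w)).take v.length) ((a⁻¹ (v ++ w)).drop v.length)
      rw [List.take_append_drop, htl, show ∀ x : Vertex, a (a⁻¹ x) = x from Equiv.apply_symm_apply a] at h2
      rw [← h2]
      simpa using List.take_left (l₁ := v) (l₂ := w)
    have h3 := congrArg (⇑a⁻¹) key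
    rwa [show ∀ x : Vertex, a⁻¹ (a x) = x from Equiv.symm_apply_apply a] at h3

/-- wreath recursion, forward map: `(g,h)σᵗ` -/
def wrFun (g h : Vertex → Vertex) (t : Bool) : Vertex → Vertex
  | [] => []
  | x :: v => (xor x t) :: (cond x (h v) (g v))

/-- wreath recursion, inverse map -/
def wrFunInv (g h : Vertex → Vertex) (t : Bool) : Vertex → Vertex
  | [] => []
  | y :: w => (xor y t) :: (cond (xor y t) (h w) (g w))

/-- `(g,h)σᵗ` as a permutation of the vertices. -/
def wrPerm (g h : Equiv.Perm Vertex) (t : Bool) : Equiv.Perm Vertex where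
  toFun := wrFun ⇑g ⇑h t
  invFun := wrFunInv ⇑g.symm ⇑h.symm t
  left_inv := by
    intro v
    cases v with
    | nil => rfl
    | cons x v => cases x <;> cases t <;> simp [wrFun, wrFunInv]
  right_inv := by
    intro v
    cases v with
    | nil => rfl
    | cons x v => cases x <;> cases t <;> simp [wrFun, wrFunInv]

/-- The element `(g,h)σᵗ` of `Ω`: acts on the first level by `σᵗ` (where `σ` is the
swap of the two level-one subtrees), with section `g` at the vertex `0` and section
`h` at the vertex `1`.  Thus `(γ₀,γ₁)τ` of the wreath recursion
`Ω ≃ (Ω × Ω) ⋊ S₂` is `wr γ₀ γ₁ t` (`t = true` iff `τ = σ`). -/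
def wr (g h : TreeAut) (t : Bool) : TreeAut :=
  ⟨wrPerm g.1 h.1 t, by
    have hg : IsTreeAutFun ⇑g.1 := g.2
    have hh : IsTreeAutFun ⇑h.1 := h.2
    constructor
    · intro v
      cases v with
      | nil => rfl
      | cons x v =>
        cases x <;> simp [wrPerm, wrFun, hg.1, hh.1]
    · intro v w
      cases v with
      | nil => simp [wrPerm, wrFun]
      | cons x v =>
        cases x <;> simp [wrPerm, wrFun, hg.2, hh.2]⟩

/-- Application of a tree automorphism to a vertex. -/
def ap (γ : TreeAut) (v : Vertex) : Vertex := γ.1 v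

/-- The permutation induced by `γ ∈ Ω` on level `n` of the tree. -/
def levelPerm (n : ℕ) (γ : TreeAut) : Equiv.Perm (List.Vector Bool n) where
  toFun v := ⟨γ.1 v.1, by
    have h : IsTreeAutFun ⇑γ.1 := γ.2
    rw [h.1 v.1]; exact v.2⟩
  invFun v := ⟨γ.1.symm v.1, by
    have h : IsTreeAutFun ⇑γ.1 := γ.2
    have h2 := h.1 (γ.1.symm v.1)
    rw [Equiv.apply_symm_apply] at h2
    exact h2.symm.trans v.2⟩
  left_inv v := Subtype.ext (Equiv.symm_apply_apply _ _)
  right_inv v := Subtype.ext (Equiv.apply_symm_apply _ _)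

/-- Restriction to level `n` as a group homomorphism. -/
def levelHom (n : ℕ) : TreeAut →* Equiv.Perm (List.Vector Bool n) where
  toFun := levelPerm n
  map_one' := Equiv.ext fun v => Subtype.ext rfl
  map_mul' := fun g h => Equiv.ext fun v => Subtype.ext rfl

/-- `sgn_n`: the sign of the permutation induced on level `n`. -/
def sgn (n : ℕ) (γ : TreeAut) : ℤˣ := Equiv.Perm.sign (levelPerm n γ)

/-- An odometer: acts as a single `2^n`-cycle on each level `n ≥ 1`. -/
def IsOdometer (γ : TreeAut) : Prop :=
  ∀ n : ℕ, 1 ≤ n → (levelPerm n γ).IsCycle ∧ (levelPerm n γ).support = Finset.univ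

/-- The profinite topology on `Ω`: the coarsest topology making all level
restrictions (to the discrete finite groups) continuous. -/
instance : TopologicalSpace TreeAut :=
  ⨅ n : ℕ, TopologicalSpace.induced (levelPerm n) ⊥

/-- A vertex `w` is in a stable cycle of `γ` of length `k`: its `γ`-orbit has exactly
`k` elements, and for every level `m` above the level of `w`, all level-`m` vertices
lying above this orbit are in one single `γ`-cycle (necessarily of length
`2^(m - n) * k`, which we record via the periodicity condition). -/
def InStableCycle (γ : TreeAut) (w : Vertex) (k : ℕ) : Prop :=
  0 < k ∧ ap (γ ^ k) w = w ∧ (∀ j : ℕ, 0 < j → j < k → ap (γ ^ j) w ≠ w) ∧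
  (∀ u : Vertex, w.length < u.length → (∃ i : ℕ, u.take w.length = ap (γ ^ i) w) →
    (ap (γ ^ (2 ^ (u.length - w.length) * k)) u = u ∧
      ∀ u' : Vertex, u'.length = u.length →
        (∃ i : ℕ, u'.take w.length = ap (γ ^ i) w) → ∃ j : ℕ, ap (γ ^ j) u = u'))

/-- Self-similar subgroup: closed under taking sections (here the section of `γ` at
the first-level vertex `x` is characterized by `(xv)γ = (x)γ ⬝ (v)γₓ`). -/
def SelfSimilar (H : Subgroup TreeAut) : Prop :=
  ∀ γ ∈ H, ∀ x : Bool, ∀ δ : TreeAut,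
    (∀ v : Vertex, ap γ (x :: v) = ap γ [x] ++ ap δ v) → δ ∈ H


/-!
If `γ = (g₀, g₁)σ` then `γ² = (g₁g₀, g₀g₁)` and `σ` swaps the two halves of each level, so `γ`
is transitive on level `n + 1` as soon as `g₁g₀` is transitive on level `n`. Let `γ` and `ε` be
the products of the odd- and the even-indexed generators. The wreath recursion gives
`γ = (x, y)σ` with `yx` conjugate to `ε`, and `ε = (1, γ)σ`; hence transitivity of each of them
on level `n` yields transitivity of the other on level `n + 1`, and both are odometers.
-/

section DescProd

variable {G : Type*} [Monoid G]

/-- The paper composes left to right, while `Equiv.Perm` composes right to left, so its product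
`a₁a₃⋯a_{r−1}` is `descProd (fun j => a (2 * j + 1)) (r / 2)` here. -/
def descProd (f : ℕ → G) (k : ℕ) : G := (List.ofFn fun j : Fin k => f j).reverse.prod

@[simp] lemma descProd_zero (f : ℕ → G) : descProd f 0 = 1 := rfl

lemma descProd_succ (f : ℕ → G) (k : ℕ) : descProd f (k + 1) = f k * descProd f k := by
  rw [descProd, List.ofFn_succ', List.concat_eq_append, List.reverse_append]
  simp [descProd]

@[simp] lemma descProd_one (f : ℕ → G) : descProd f 1 = f 0 := by
  simp [descProd_succ]

lemma descProd_add (f : ℕ → G) (m k : ℕ) :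
    descProd f (m + k) = descProd (fun j => f (m + j)) k * descProd f m := by
  induction k with
  | zero => simp
  | succ k ih => rw [← add_assoc, descProd_succ, descProd_succ, ih, mul_assoc]

lemma descProd_congr {f g : ℕ → G} {k : ℕ} (h : ∀ j < k, f j = g j) :
    descProd f k = descProd g k := by
  unfold descProd
  congr 2
  exact List.ofFn_inj.2 (funext fun j => h j j.2)

end DescProd

lemma wr_mul (g₀ g₁ h₀ h₁ : TreeAut) (t u : Bool) :
    wr g₀ g₁ t * wr h₀ h₁ u = wr (cond u g₁ g₀ * h₀) (cond u g₀ g₁ * h₁) (xor t u) := by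
  refine Subtype.ext <| Equiv.ext fun v => ?_
  cases v with
  | nil => cases u <;> rfl
  | cons x v => cases x <;> cases t <;> cases u <;> rfl

lemma wr_one_one : wr 1 1 false = 1 :=
  Subtype.ext <| Equiv.ext fun v => by
    cases v with
    | nil => rfl
    | cons x v => cases x <;> rfl

def wrHom : TreeAut × TreeAut →* TreeAut :=
  MonoidHom.mk' (fun g => wr g.1 g.2 false) fun g h => by simp [wr_mul]

lemma wr_false_zpow (g₀ g₁ : TreeAut) (i : ℤ) : wr g₀ g₁ false ^ i = wr (g₀ ^ i) (g₁ ^ i) false :=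
  (map_zpow wrHom (g₀, g₁) i).symm

lemma descProd_wr_one_left (g : ℕ → TreeAut) (k : ℕ) :
    descProd (fun j => wr 1 (g j) false) k = wr 1 (descProd g k) false := by
  induction k with
  | zero => exact wr_one_one.symm
  | succ k ih => simp [descProd_succ, ih, wr_mul]

lemma descProd_wr_one_right (g : ℕ → TreeAut) (k : ℕ) :
    descProd (fun j => wr (g j) 1 false) k = wr (descProd g k) 1 false := by
  induction k with
  | zero => exact wr_one_one.symm
  | succ k ih => simp [descProd_succ, ih, wr_mul]

lemma length_apply (γ : TreeAut) (v : Vertex) : ((γ : Equiv.Perm Vertex) v).length = v.length :=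
  γ.2.1 v

def IsLevelTransitive (γ : TreeAut) (n : ℕ) : Prop :=
  ∀ v w : Vertex, v.length = n → w.length = n → (γ : Equiv.Perm Vertex).SameCycle v w

lemma isLevelTransitive_zero (γ : TreeAut) : IsLevelTransitive γ 0 := by
  intro v w hv hw
  rw [List.length_eq_zero_iff.1 hv, List.length_eq_zero_iff.1 hw]

lemma IsLevelTransitive.of_isConj {γ δ : TreeAut} {n : ℕ} (h : IsLevelTransitive γ n)
    (hc : IsConj γ δ) : IsLevelTransitive δ n := by
  obtain ⟨c, rfl⟩ := isConj_iff.1 hc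
  intro v w hv hw
  change ((c : Equiv.Perm Vertex) * γ * (c : Equiv.Perm Vertex)⁻¹).SameCycle v w
  rw [Equiv.Perm.sameCycle_conj]
  exact h _ _ ((length_apply c⁻¹ v).trans hv) ((length_apply c⁻¹ w).trans hw)

lemma IsLevelTransitive.wr_true {g₀ g₁ : TreeAut} {n : ℕ} (h : IsLevelTransitive (g₁ * g₀) n) :
    IsLevelTransitive (wr g₀ g₁ true) (n + 1) := by
  set e := wr g₀ g₁ true
  have hsq : e * e = wr (g₁ * g₀) (g₀ * g₁) false := by simp [e, wr_mul]
  have hfalse : ∀ v w : Vertex, v.length = n → w.length = n →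
      (e : Equiv.Perm Vertex).SameCycle (false :: v) (false :: w) := by
    intro v w hv hw
    obtain ⟨i, hi⟩ := h v w hv hw
    refine ⟨2 * i, ?_⟩
    rw [← Subgroup.coe_zpow, zpow_mul, zpow_two, hsq, wr_false_zpow]
    change false :: ((g₁ * g₀) ^ i : TreeAut).1 v = false :: w
    rw [Subgroup.coe_zpow, hi]
  have hfirst : ∀ u : Vertex, u.length = n + 1 →
      ∃ v : Vertex, v.length = n ∧ (e : Equiv.Perm Vertex).SameCycle (false :: v) u := by
    rintro (_ | ⟨x, u⟩) hxu
    · simp at hxu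
    have hu : u.length = n := by simpa using hxu
    cases x
    · exact ⟨u, hu, Equiv.Perm.SameCycle.refl _ _⟩
    · refine ⟨(g₀⁻¹ : TreeAut).1 u, (length_apply _ u).trans hu, ?_⟩
      have he : (e : Equiv.Perm Vertex) (false :: (g₀⁻¹ : TreeAut).1 u) = true :: u := by
        change true :: (g₀ * g₀⁻¹ : TreeAut).1 u = true :: u
        rw [mul_inv_cancel]
        rfl
      rw [← he]
      exact Equiv.Perm.sameCycle_apply_right.2 (Equiv.Perm.SameCycle.refl _ _)
  intro u w hu hw
  obtain ⟨v, hv, hvu⟩ := hfirst u hu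
  obtain ⟨v', hv', hv'w⟩ := hfirst w hw
  exact hvu.symm.trans ((hfalse v v' hv hv').trans hv'w)

def ReducesTo (γ δ : TreeAut) : Prop :=
  ∃ g₀ g₁ : TreeAut, γ = wr g₀ g₁ true ∧ IsConj (g₁ * g₀) δ

lemma IsLevelTransitive.of_reducesTo {γ δ : TreeAut} {n : ℕ} (h : ReducesTo γ δ)
    (hδ : IsLevelTransitive δ n) : IsLevelTransitive γ (n + 1) := by
  obtain ⟨g₀, g₁, rfl, hc⟩ := h
  exact (hδ.of_isConj hc.symm).wr_true

lemma isLevelTransitive_of_reducesTo_of_reducesTo {γ δ : TreeAut} (hγ : ReducesTo γ δ)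
    (hδ : ReducesTo δ γ) (n : ℕ) : IsLevelTransitive γ n := by
  suffices IsLevelTransitive γ n ∧ IsLevelTransitive δ n from this.1
  induction n with
  | zero => exact ⟨isLevelTransitive_zero γ, isLevelTransitive_zero δ⟩
  | succ n ih => exact ⟨ih.2.of_reducesTo hγ, ih.1.of_reducesTo hδ⟩

lemma _root_.Equiv.Perm.isCycle_and_support_eq_univ_of_forall_sameCycle {α : Type*} [Fintype α]
    [DecidableEq α] [Nontrivial α] {f : Equiv.Perm α} (h : ∀ x y, f.SameCycle x y) :
    f.IsCycle ∧ f.support = Finset.univ := by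
  have hmoved : ∀ x, f x ≠ x := fun x hx =>
    (exists_ne x).elim fun y hy => hy ((h x y).eq_of_left hx).symm
  obtain ⟨x⟩ := (inferInstance : Nonempty α)
  exact ⟨⟨x, hmoved x, fun y _ => h x y⟩,
    Finset.eq_univ_iff_forall.2 fun y => Equiv.Perm.mem_support.2 (hmoved y)⟩

lemma sameCycle_levelPerm {γ : TreeAut} {n : ℕ} {x y : List.Vector Bool n}
    (h : (γ : Equiv.Perm Vertex).SameCycle x.1 y.1) : (levelPerm n γ).SameCycle x y := by
  obtain ⟨i, hi⟩ := h
  refine ⟨i, Subtype.ext ?_⟩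
  rw [show levelPerm n γ ^ i = levelPerm n (γ ^ i) from (map_zpow (levelHom n) γ i).symm]
  change (γ ^ i : TreeAut).1 x.1 = y.1
  rwa [Subgroup.coe_zpow]

lemma isOdometer_of_isLevelTransitive {γ : TreeAut} (h : ∀ n, IsLevelTransitive γ n) :
    IsOdometer γ := by
  intro n hn
  have : Nontrivial (List.Vector Bool n) :=
    ⟨List.Vector.replicate n false, List.Vector.replicate n true, fun he => by
      obtain ⟨m, rfl⟩ : ∃ m, n = m + 1 := ⟨n - 1, by omega⟩
      simpa [List.Vector.replicate] using congrArg Subtype.val he⟩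
  exact Equiv.Perm.isCycle_and_support_eq_univ_of_forall_sameCycle fun x y =>
    sameCycle_levelPerm (h n x.1 y.1 x.2 y.2)

section Generators

variable {b : ℕ → TreeAut} {p q : ℕ}

lemma odd_reducesTo_even (hq : 1 ≤ q) (hqp : q ≤ p) (h1 : b 1 = wr (b (2 * p)) 1 true)
    (hmid : ∀ i, 1 ≤ i → i + 1 < 2 * q → b (i + 1) = wr 1 (b i) false)
    (hhi : ∀ i, 2 * q ≤ i → i < 2 * p → b (i + 1) = wr (b i) 1 false) :
    ReducesTo (descProd (fun j => b (2 * j + 1)) p) (descProd (fun j => b (2 * j + 2)) p) := by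
  obtain ⟨m, rfl⟩ : ∃ m, q = 1 + m := ⟨q - 1, by omega⟩
  obtain ⟨d, rfl⟩ : ∃ d, p = 1 + m + d := ⟨p - (1 + m), by omega⟩
  set E := descProd (fun j => b (2 * (1 + j))) m
  set H := descProd (fun j => b (2 * (1 + m + j))) d
  have hodd :
      descProd (fun j => b (2 * j + 1)) (1 + m + d) = wr (E * b (2 * (1 + m + d))) H true := by
    rw [descProd_add, descProd_add, descProd_one,
      descProd_congr fun j _ => hhi (2 * (1 + m + j)) (by omega) (by omega), descProd_wr_one_right,
      descProd_congr fun j _ => hmid (2 * (1 + j)) (by omega) (by omega), descProd_wr_one_left,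
      h1, wr_mul, wr_mul]
    simp [E, H]
  have heven : descProd (fun j => b (2 * j + 2)) (1 + m + d) = b (2 * (1 + m + d)) * (H * E) := by
    rw [show 1 + m + d = m + d + 1 by omega, descProd_succ, descProd_add]
    congr 2
    · exact descProd_congr fun j _ => congrArg b (by omega)
    · exact descProd_congr fun j _ => congrArg b (by omega)
  exact ⟨_, _, hodd, heven ▸ isConj_iff.2 ⟨b (2 * (1 + m + d)), by group⟩⟩

lemma even_eq_wr_odd (hq : 1 ≤ q) (hqp : q ≤ p)
    (hmid : ∀ i, 1 ≤ i → i + 1 < 2 * q → b (i + 1) = wr 1 (b i) false)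
    (hs : b (2 * q) = wr 1 (b (2 * q - 1)) true)
    (hhi : ∀ i, 2 * q ≤ i → i < 2 * p → b (i + 1) = wr (b i) 1 false) :
    descProd (fun j => b (2 * j + 2)) p = wr 1 (descProd (fun j => b (2 * j + 1)) p) true := by
  obtain ⟨m, rfl⟩ : ∃ m, q = m + 1 := ⟨q - 1, by omega⟩
  obtain ⟨d, rfl⟩ : ∃ d, p = m + 1 + d := ⟨p - (m + 1), by omega⟩
  rw [descProd_add, descProd_succ, descProd_add, descProd_succ,
    descProd_congr fun j _ => hhi (2 * (m + 1 + j) + 1) (by omega) (by omega),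
    descProd_wr_one_right,
    descProd_congr fun j _ => hmid (2 * j + 1) (by omega) (by omega), descProd_wr_one_left,
    show 2 * m + 2 = 2 * (m + 1) from rfl, hs, show 2 * (m + 1) - 1 = 2 * m + 1 by omega,
    wr_mul, wr_mul]
  simp

end Generators

theorem odometer_of_even_even_general
    (r s : ℕ) (hs1 : 1 < s) (hsr : s ≤ r)
    (a : ZMod r → TreeAut)
    (ha1 : a 1 = wr (a (r : ZMod r)) 1 true)
    (hmid : ∀ i : ℕ, 2 ≤ i → i ≤ s - 1 → a (i : ZMod r) = wr 1 (a ((i - 1 : ℕ) : ZMod r)) false)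
    (has : a (s : ZMod r) = wr 1 (a ((s - 1 : ℕ) : ZMod r)) true)
    (hhi : ∀ i : ℕ, s + 1 ≤ i → i ≤ r → a (i : ZMod r) = wr (a ((i - 1 : ℕ) : ZMod r)) 1 false)
    (hre : Even r) (hse : Even s) :
    IsOdometer
      ((List.ofFn (fun j : Fin (r / 2) => a ((2 * (j : ℕ) + 1 : ℕ) : ZMod r))).reverse.prod) ∧
    ∃ γ ∈ closure ((Subgroup.closure (Set.range a) : Subgroup TreeAut) : Set TreeAut),
      IsOdometer γ := by
  obtain ⟨p, hp⟩ := hre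
  obtain ⟨q, hq⟩ := hse
  set b : ℕ → TreeAut := fun i => a i
  have h1 : b 1 = wr (b (2 * p)) 1 true := by
    simpa [b, show 2 * p = r by omega] using ha1
  have hmid' (i : ℕ) (hi : 1 ≤ i) (hiq : i + 1 < 2 * q) : b (i + 1) = wr 1 (b i) false :=
    hmid (i + 1) (by omega) (by omega)
  have hs : b (2 * q) = wr 1 (b (2 * q - 1)) true := by
    rw [show 2 * q = s by omega]; exact has
  have hhi' (i : ℕ) (hi : 2 * q ≤ i) (hip : i < 2 * p) : b (i + 1) = wr (b i) 1 false :=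
    hhi (i + 1) (by omega) (by omega)
  have hodometer : IsOdometer ((List.ofFn fun j : Fin (r / 2) => b (2 * j + 1)).reverse.prod) := by
    rw [show r / 2 = p by omega]
    change IsOdometer (descProd (fun j => b (2 * j + 1)) p)
    exact isOdometer_of_isLevelTransitive <| isLevelTransitive_of_reducesTo_of_reducesTo
      (odd_reducesTo_even (by omega) (by omega) h1 hmid' hhi')
      ⟨1, _, even_eq_wr_odd (by omega) (by omega) hmid' hs hhi', by rw [mul_one]⟩
  refine ⟨hodometer, _,
    subset_closure ((Subgroup.closure _).list_prod_mem fun x hx => ?_), hodometer⟩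
  obtain ⟨j, rfl⟩ := List.mem_ofFn.1 (List.mem_reverse.1 hx)
  exact Subgroup.subset_closure ⟨_, rfl⟩

/-- if r and s are even then γ = a₁a₃⋯a_{r−1} is an odometer;
consequently G = ⟨⟨a₁,…,a_r⟩⟩ contains an odometer. -/
theorem odometer_of_even_even
    (r s : ℕ) (hr : 3 ≤ r) (hs1 : 1 < s) (hsr : s ≤ r)
    (a : ZMod r → TreeAut)
    (ha1 : a 1 = wr (a (r : ZMod r)) 1 true)
    (hmid : ∀ i : ℕ, 2 ≤ i → i ≤ s - 1 → a (i : ZMod r) = wr 1 (a ((i - 1 : ℕ) : ZMod r)) false)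
    (has : a (s : ZMod r) = wr 1 (a ((s - 1 : ℕ) : ZMod r)) true)
    (hhi : ∀ i : ℕ, s + 1 ≤ i → i ≤ r → a (i : ZMod r) = wr (a ((i - 1 : ℕ) : ZMod r)) 1 false)
    (hre : Even r) (hse : Even s) :
    IsOdometer
      ((List.ofFn (fun j : Fin (r / 2) => a ((2 * (j : ℕ) + 1 : ℕ) : ZMod r))).reverse.prod) ∧
    ∃ γ ∈ closure ((Subgroup.closure (Set.range a) : Subgroup TreeAut) : Set TreeAut),
      IsOdometer γ :=
  odometer_of_even_even_general r s hs1 hsr a ha1 hmid has hhi hre hse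

end BinTree
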